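/- Define φ_T on a decorated tree T by: label each internal node of depth p > 0 with the number of its descendant leaves whose label is at most p - 2, label the root with fl(T), and change all leaf labels to 1. Then φ_T(T) is a β-(1,0) tree with the same underlying plane tree as T, i.e., every leaf is labeled 1, the root label equals the sum of its children's labels, and every other internal node has label between 1 and the sum of its children's labels. -/
import Mathlib


/-- Rooted plane trees with a natural-number label on every node. -/
inductive BTree where
  | node : ℕ → List BTree → BTree

namespace BTree

def label : BTree → ℕ
  | node l _ => l

def children : BTree → List BTree
  | node _ c => c

/-- Sum of the labels of a list of trees (used for the children of a node). -/
def childSum (c : List BTree) : ℕ := (c.map label).sum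

end BTree

/-- The β-(1,0) condition for non-root subtrees: leaves are labeled 1, and internal
nodes carry a label between 1 and the sum of the labels of their children. -/
inductive IsBetaSub : BTree → Prop where
  | leaf : IsBetaSub (.node 1 [])
  | node {l : ℕ} {c : List BTree} (hne : c ≠ []) (h1 : 1 ≤ l)
      (h2 : l ≤ BTree.childSum c) (hc : ∀ t ∈ c, IsBetaSub t) : IsBetaSub (.node l c)

/-- A β-(1,0) tree: the root is internal, its label is the sum of the labels of its
children, and all subtrees satisfy the β-(1,0) condition. -/
def IsBeta : BTree → Prop
  | .node l c => c ≠ [] ∧ l = BTree.childSum c ∧ ∀ t ∈ c, IsBetaSub t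

/-- The label of the root. -/
def rootLabel (B : BTree) : ℕ := B.label

/-- Δ_B(B,i): attach the root of `B` to a new vertex as its unique child, labeling
both the old and the new root by `i`. -/
def deltaB : BTree → ℕ → BTree
  | .node _ c, i => .node i [.node i c]

/-- Π_B: remove the root (which has a unique child) and relabel the new root by
the sum of the labels of its children. -/
def piB : BTree → BTree
  | .node _ [.node _ c] => .node (BTree.childSum c) c
  | t => t

/-- Rooted plane trees with integer labels on the leaves. -/
inductive DTree where
  | leaf : ℤ → DTree
  | node : List DTree → DTree

mutual
/-- The list of leaf labels of a tree, in left-to-right (prefix traversal) order. -/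
def leafLabels : DTree → List ℤ
  | .leaf l => [l]
  | .node ts => leafLabelsList ts
def leafLabelsList : List DTree → List ℤ
  | [] => []
  | t :: ts => leafLabels t ++ leafLabelsList ts
end

/-- The three conditions of decorated trees, for a subtree whose root is at depth `d`:
leaf labels are at least -1 and strictly less than the depth of their parent;
every internal node of positive depth `d` has a descendant leaf labeled at most `d - 2`;
and in any direct subtree of an internal node of depth `d`, a leaf labeled `d` is
preceded in traversal order only by leaves labeled at least `d`. -/
inductive DecoAt : DTree → ℕ → Prop where
  | leaf {l : ℤ} {d : ℕ} (h1 : -1 ≤ l) (h2 : l < (d : ℤ) - 1) : DecoAt (.leaf l) d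
  | node {ts : List DTree} {d : ℕ} (hne : ts ≠ [])
      (h2 : 0 < d → ∃ x ∈ leafLabelsList ts, x ≤ (d : ℤ) - 2)
      (h3 : ∀ t' ∈ ts, ∀ a b, leafLabels t' = a ++ (d : ℤ) :: b → ∀ x ∈ a, (d : ℤ) ≤ x)
      (h4 : ∀ t' ∈ ts, DecoAt t' (d + 1)) : DecoAt (.node ts) d

/-- A decorated tree: the root is at depth 0. -/
def IsDeco (T : DTree) : Prop := DecoAt T 0

/-- The number of free leaves (leaves labeled -1). -/
def fl (T : DTree) : ℕ := (leafLabels T).count (-1)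

mutual
/-- Increment leaf labels, where the counter `m` is the number of free leaves (from
the left) that still must be incremented; once it reaches 0, remaining free leaves
are left untouched. Returns the new tree and the remaining counter. -/
def incUpTo : DTree → ℕ → DTree × ℕ
  | .leaf l, m =>
      if l = -1 then (if 0 < m then (.leaf 0, m - 1) else (.leaf (-1), m))
      else (.leaf (l + 1), m)
  | .node ts, m =>
      let p := incList ts m
      (.node p.1, p.2)
def incList : List DTree → ℕ → List DTree × ℕ
  | [], m => ([], m)
  | t :: ts, m =>
      let p := incUpTo t m
      let q := incList ts p.2
      (p.1 :: q.1, q.2)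
end

/-- Δ_T(T,i): attach `T` under a new root vertex and add 1 to every leaf label,
except for the last `i` free leaves (in traversal order). -/
def deltaT (T : DTree) (i : ℕ) : DTree := .node [(incUpTo T (fl T - i)).1]

mutual
/-- Subtract 1 from every non-free leaf label. -/
def decLeaves : DTree → DTree
  | .leaf l => if l = -1 then .leaf (-1) else .leaf (l - 1)
  | .node ts => .node (decList ts)
def decList : List DTree → List DTree
  | [] => []
  | t :: ts => decLeaves t :: decList ts
end

/-- Π_T: remove the root (which has a unique child) and subtract 1 from every
non-free leaf label. -/
def piT : DTree → DTree
  | .node [t] => decLeaves t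
  | t => t

mutual
/-- φ_T: label each internal node of depth `d > 0` by the number of its descendant
leaves with label at most `d - 2`, label the root (depth 0) by `fl T`, and change
all leaf labels to 1. -/
def phiAux : DTree → ℕ → BTree
  | .leaf _, _ => .node 1 []
  | .node ts, d =>
      .node (if d = 0 then (leafLabelsList ts).count (-1)
             else ((leafLabelsList ts).filter (fun x => x ≤ (d : ℤ) - 2)).length)
        (phiAuxList ts (d + 1))
def phiAuxList : List DTree → ℕ → List BTree
  | [], _ => []
  | t :: ts, d => phiAux t d :: phiAuxList ts d
end

def phiT (T : DTree) : BTree := phiAux T 0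

/-- Unlabeled rooted plane trees, used to compare underlying tree shapes. -/
inductive PTree where
  | node : List PTree → PTree

mutual
def dshape : DTree → PTree
  | .leaf _ => .node []
  | .node ts => .node (dshapeList ts)
def dshapeList : List DTree → List PTree
  | [] => []
  | t :: ts => dshape t :: dshapeList ts
end

mutual
def bshape : BTree → PTree
  | .node _ ts => .node (bshapeList ts)
def bshapeList : List BTree → List PTree
  | [] => []
  | t :: ts => bshape t :: bshapeList ts
end

/-! ### Auxiliary lemmas -/

theorem filter_len_mono (l : List ℤ) (p q : ℤ → Bool) (h : ∀ x, p x → q x) :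
    (l.filter p).length ≤ (l.filter q).length := by
  induction l with
  | nil => simp
  | cons a l ih =>
    by_cases hp : p a
    · simp [List.filter_cons, hp, h a hp]; omega
    · by_cases hq : q a <;> simp [List.filter_cons, hp, hq] <;> omega

mutual
theorem leafLabels_ge (t : DTree) (d : ℕ) (h : DecoAt t d) :
    ∀ x ∈ leafLabels t, -1 ≤ x := by
  cases h with
  | leaf h1 h2 => intro x hx; simp [leafLabels] at hx; omega
  | @node ts d hne h2 h3 h4 =>
    intro x hx
    rw [show leafLabels (.node ts) = leafLabelsList ts from rfl] at hx
    exact leafLabelsList_ge ts (d + 1) h4 x hx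
theorem leafLabelsList_ge (ts : List DTree) (d : ℕ) (h : ∀ t ∈ ts, DecoAt t d) :
    ∀ x ∈ leafLabelsList ts, -1 ≤ x := by
  cases ts with
  | nil => intro x hx; simp [leafLabelsList] at hx
  | cons t ts =>
    intro x hx
    rw [show leafLabelsList (t :: ts) = leafLabels t ++ leafLabelsList ts from rfl,
      List.mem_append] at hx
    rcases hx with hx | hx
    · exact leafLabels_ge t d (h t (by simp)) x hx
    · exact leafLabelsList_ge ts d (fun t' ht' => h t' (by simp [ht'])) x hx
end

/-- Key bound: a count of the leaves of a subtree (at depth `d+1`) with label at most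
`c ≤ d - 1` is bounded by the label `φ_T` gives that subtree. -/
theorem filter_le_label (t : DTree) (d : ℕ) (c : ℤ) (h : DecoAt t (d + 1))
    (hc : c ≤ (d : ℤ) - 1) :
    ((leafLabels t).filter (fun x => x ≤ c)).length ≤ (phiAux t (d + 1)).label := by
  cases t with
  | leaf l =>
    show (([l] : List ℤ).filter _).length ≤ (BTree.node 1 []).label
    simp [List.filter]
    split <;> simp [BTree.label]
  | node ts =>
    show ((leafLabelsList ts).filter _).length ≤
      (BTree.node (if d + 1 = 0 then _ else _) _).label
    rw [if_neg (by omega)]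
    show _ ≤ BTree.label (BTree.node _ _)
    rw [BTree.label]
    apply filter_len_mono
    intro x hx
    simp only [decide_eq_true_eq] at hx ⊢
    push_cast
    omega

theorem childSum_cons (b : BTree) (bs : List BTree) :
    BTree.childSum (b :: bs) = b.label + BTree.childSum bs := by
  simp [BTree.childSum]

/-- Sum version of the key bound over a list of subtrees. -/
theorem filter_le_childSum (ts : List DTree) (d : ℕ) (c : ℤ)
    (h : ∀ t ∈ ts, DecoAt t (d + 1)) (hc : c ≤ (d : ℤ) - 1) :
    ((leafLabelsList ts).filter (fun x => x ≤ c)).length ≤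
      BTree.childSum (phiAuxList ts (d + 1)) := by
  induction ts with
  | nil => simp [leafLabelsList, phiAuxList, BTree.childSum]
  | cons t ts ih =>
    rw [show leafLabelsList (t :: ts) = leafLabels t ++ leafLabelsList ts from rfl,
      show phiAuxList (t :: ts) (d + 1) = phiAux t (d + 1) :: phiAuxList ts (d + 1) from rfl,
      List.filter_append, List.length_append, childSum_cons]
    exact Nat.add_le_add (filter_le_label t d c (h t (by simp)) hc)
      (ih (fun t' ht' => h t' (by simp [ht'])))

/-- At depth 1, the label `φ_T` assigns equals the number of free leaves. -/
theorem label_eq_count (t : DTree) (h : DecoAt t 1) :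
    (phiAux t 1).label = (leafLabels t).count (-1) := by
  cases h with
  | leaf h1 h2 =>
    have : ‹ℤ› = -1 := by omega
    subst this
    simp [phiAux, leafLabels, BTree.label]
  | @node ts d hne h2 h3 h4 =>
    show (BTree.node (if (1:ℕ) = 0 then _ else _) _).label = _
    rw [if_neg (by omega), BTree.label,
      show leafLabels (.node ts) = leafLabelsList ts from rfl]
    rw [List.count, List.countP_eq_length_filter]
    congr 1
    apply List.filter_congr
    intro x hx
    have hge := leafLabelsList_ge ts 2 h4 x hx
    rcases eq_or_ne x (-1) with h | h
    · subst h; norm_num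
    · have h' : ¬ (x ≤ ((1 : ℕ) : ℤ) - 2) := by push_cast; omega
      have h'' : ¬ (x ≤ (-1 : ℤ)) := by omega
      simp [h, h', h'']

theorem childSum_eq_count (ts : List DTree) (h : ∀ t ∈ ts, DecoAt t 1) :
    BTree.childSum (phiAuxList ts 1) = (leafLabelsList ts).count (-1) := by
  induction ts with
  | nil => simp [leafLabelsList, phiAuxList, BTree.childSum]
  | cons t ts ih =>
    rw [show leafLabelsList (t :: ts) = leafLabels t ++ leafLabelsList ts from rfl,
      show phiAuxList (t :: ts) 1 = phiAux t 1 :: phiAuxList ts 1 from rfl,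
      childSum_cons, List.count_append, label_eq_count t (h t (by simp)),
      ih (fun t' ht' => h t' (by simp [ht']))]

mutual
theorem mem_phiAuxList {b : BTree} (ts : List DTree) (d : ℕ)
    (hb : b ∈ phiAuxList ts d) : ∃ t ∈ ts, b = phiAux t d := by
  cases ts with
  | nil => simp [phiAuxList] at hb
  | cons t ts =>
    rw [show phiAuxList (t :: ts) d = phiAux t d :: phiAuxList ts d from rfl,
      List.mem_cons] at hb
    rcases hb with hb | hb
    · exact ⟨t, by simp, hb⟩
    · obtain ⟨t', ht', he⟩ := mem_phiAuxList ts d hb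
      exact ⟨t', by simp [ht'], he⟩
end

mutual
theorem isBetaSub_phiAux (t : DTree) (d : ℕ) (h : DecoAt t (d + 1)) :
    IsBetaSub (phiAux t (d + 1)) := by
  cases h with
  | leaf h1 h2 => exact IsBetaSub.leaf
  | @node ts d' hne h2 h3 h4 =>
    show IsBetaSub (BTree.node (if d + 1 = 0 then _ else _) _)
    rw [if_neg (by omega)]
    apply IsBetaSub.node
    · cases ts with
      | nil => exact absurd rfl hne
      | cons t ts => simp [phiAuxList]
    · obtain ⟨x, hx, hxle⟩ := h2 (by omega)
      have hmem : x ∈ (leafLabelsList ts).filter (fun x => x ≤ ((d + 1 : ℕ) : ℤ) - 2) :=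
        List.mem_filter.mpr ⟨hx, by simpa using hxle⟩
      exact List.length_pos_iff.mpr (List.ne_nil_of_mem hmem)
    · exact filter_le_childSum ts (d + 1) (((d + 1 : ℕ) : ℤ) - 2) h4 (by push_cast; omega)
    · intro b hb
      obtain ⟨t', ht', he⟩ := mem_phiAuxList ts (d + 2) hb
      rw [he]
      exact isBetaSub_phiAux t' (d + 1) (h4 t' ht')
end

mutual
theorem bshape_phiAux (t : DTree) (d : ℕ) : bshape (phiAux t d) = dshape t := by
  cases t with
  | leaf l => rfl
  | node ts =>
    show PTree.node (bshapeList (phiAuxList ts (d + 1))) = PTree.node (dshapeList ts)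
    rw [bshapeList_phiAuxList ts (d + 1)]
theorem bshapeList_phiAuxList (ts : List DTree) (d : ℕ) :
    bshapeList (phiAuxList ts d) = dshapeList ts := by
  cases ts with
  | nil => rfl
  | cons t ts =>
    show bshape (phiAux t d) :: bshapeList (phiAuxList ts d) = _
    rw [bshape_phiAux t d, bshapeList_phiAuxList ts d]
    rfl
end

theorem stmt17 (T : DTree) (h : IsDeco T) :
    IsBeta (phiT T) ∧ bshape (phiT T) = dshape T := by
  refine ⟨?_, bshape_phiAux T 0⟩
  cases h with
  | leaf h1 h2 => simp at h2; omega
  | @node ts d hne h2 h3 h4 =>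
    show IsBeta (BTree.node (if (0:ℕ) = 0 then _ else _) (phiAuxList ts 1))
    rw [if_pos rfl]
    refine ⟨?_, ?_, ?_⟩
    · cases ts with
      | nil => exact absurd rfl hne
      | cons t ts => simp [phiAuxList]
    · exact (childSum_eq_count ts h4).symm
    · intro b hb
      obtain ⟨t', ht', he⟩ := mem_phiAuxList ts 1 hb
      rw [he]
      exact isBetaSub_phiAux t' 0 (h4 t' ht')
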